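/- Fix μ ∈ ℝ. Let k_μ(ξ,ζ) be defined for each ζ > 0 by the equation ∫_{−∞}^{k_μ(ξ,ζ)} e^{μx} exp(−cosh(x)/ζ) dx = ∫_ξ^{∞} e^{μx} exp(−cosh(x)/ζ) dx, ξ ∈ ℝ, and define the path transformation S_μ : C([0,t];ℝ) → C([0,t];ℝ) by S_μ(φ)(s) := T_{φ_t + k_μ(φ_t, Z_t(φ))}(φ)(s), 0 ≤ s ≤ t. Then S_μ ∘ S_{−μ} = Id on C([0,t];ℝ). -/

import Mathlib

open MeasureTheory ProbabilityTheory Set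

/-- `A_s(φ) = ∫_0^s e^{2 φ_u} du`. -/
noncomputable def pA (φ : ℝ → ℝ) (s : ℝ) : ℝ := ∫ u in (0:ℝ)..s, Real.exp (2 * φ u)

/-- `Z_s(φ) = e^{-φ_s} A_s(φ)`. -/
noncomputable def pZ (φ : ℝ → ℝ) (s : ℝ) : ℝ := Real.exp (-(φ s)) * pA φ s

/-- The anticipative transformation `T_z` on paths over `[0,t]`:
`T_z(φ)(s) = φ_s - log(1 + (A_s(φ)/A_t(φ)) (e^z - 1))`. -/
noncomputable def pT (t z : ℝ) (φ : ℝ → ℝ) (s : ℝ) : ℝ :=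
  φ s - Real.log (1 + (pA φ s / pA φ t) * (Real.exp z - 1))

/-!
With `D_z = 1 + c A`, `c = (e^z - 1) / A_t`, we have `e^{2 T_z φ} = A' / D_z²`, whose primitive is
`A / D_z`; so `A(T_z φ) = A(φ) / D_z`. Consequently the maps `T_z` form a flow,
`T_w ∘ T_z = T_{z + w}`, with `T_z φ (t) = φ_t - z` and `Z_t(T_z φ) = Z_t(φ)`.
Reflecting `x ↦ -x` in the defining equation of `k`, and using that `c ↦ ∫_{-∞}^c` of a positive
integrable function is injective, gives `k_μ(-k_{-μ}(ξ, ζ), ζ) = -ξ`. Hence if `S_{-μ} φ = T_z φ`,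
then `S_μ (T_z φ) = T_{-z} (T_z φ) = T_0 φ = φ`.
-/

open Real

lemma sq_div_four_le_cosh (x : ℝ) : x ^ 2 / 4 ≤ cosh x := by
  have hquad := quadratic_le_exp_of_nonneg (abs_nonneg x)
  rw [← cosh_abs, cosh_eq, ← sq_abs]
  nlinarith [abs_nonneg x, exp_pos (-|x|)]

lemma integrable_exp_neg_mul_sq_add_mul {b : ℝ} (hb : 0 < b) (c : ℝ) :
    Integrable fun x : ℝ => exp (-b * x ^ 2 + c * x) := by
  refine (((integrable_exp_neg_mul_sq hb).comp_sub_right (c / (2 * b))).const_mul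
    (exp (c ^ 2 / (4 * b)))).congr (.of_forall fun x => ?_)
  simp only [← exp_add]
  congr 1
  field_simp
  ring

lemma integrable_exp_mul_mul_exp_neg_cosh_div (ν : ℝ) {ζ : ℝ} (hζ : 0 < ζ) :
    Integrable fun x : ℝ => exp (ν * x) * exp (-cosh x / ζ) := by
  refine (integrable_exp_neg_mul_sq_add_mul (by positivity : 0 < 1 / (4 * ζ)) ν).mono'
    (by fun_prop) (.of_forall fun x => ?_)
  rw [norm_of_nonneg (by positivity), ← exp_add, exp_le_exp]
  have hcosh := div_le_div_of_nonneg_right (sq_div_four_le_cosh x) hζ.le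
  have hrewrite : x ^ 2 / 4 / ζ = 1 / (4 * ζ) * x ^ 2 := by field_simp
  linarith [neg_div ζ (cosh x)]

lemma strictMono_integral_Iic {g : ℝ → ℝ} (hg : Integrable g) (hpos : ∀ x, 0 < g x) :
    StrictMono fun c => ∫ x in Iic c, g x := fun a b hab => by
  have hdiff := intervalIntegral.integral_Iic_sub_Iic hg.integrableOn hg.integrableOn
    (a := a) (b := b)
  have hpos_ab := intervalIntegral.intervalIntegral_pos_of_pos hg.intervalIntegrable hpos hab
  dsimp only
  linarith

lemma integral_Iic_eq_integral_Ici_comp_neg (f : ℝ → ℝ) (a : ℝ) :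
    ∫ x in Iic a, f x = ∫ x in Ici (-a), f (-x) := by
  rw [integral_Ici_eq_integral_Ioi, ← integral_comp_neg_Iic]
  simp only [neg_neg]

lemma k_neg_k (k : ℝ → ℝ × ℝ → ℝ)
    (hk : ∀ ν : ℝ, ∀ ξ ζ : ℝ, 0 < ζ →
      (∫ x in Iic (k ν (ξ, ζ)), exp (ν * x) * exp (-cosh x / ζ)) =
        ∫ x in Ici ξ, exp (ν * x) * exp (-cosh x / ζ))
    (ν ξ : ℝ) {ζ : ℝ} (hζ : 0 < ζ) :
    k ν (-k (-ν) (ξ, ζ), ζ) = -ξ := by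
  have hreflect (ν a : ℝ) : (∫ x in Iic a, exp (ν * x) * exp (-cosh x / ζ)) =
      ∫ x in Ici (-a), exp (-ν * x) * exp (-cosh x / ζ) := by
    simp only [integral_Iic_eq_integral_Ici_comp_neg _ a, cosh_neg, mul_neg, neg_mul]
  refine (strictMono_integral_Iic (integrable_exp_mul_mul_exp_neg_cosh_div ν hζ)
    fun x => by positivity).injective ?_
  rw [hk ν _ ζ hζ, hreflect ν, neg_neg, ← hk (-ν) ξ ζ hζ, hreflect (-ν), neg_neg]

lemma integral_div_sq_one_add_primitive_mul {f : ℝ → ℝ} {a b c : ℝ} (hab : a ≤ b)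
    (hf : ContinuousOn f (Icc a b)) (hne : ∀ u ∈ Icc a b, 1 + (∫ v in a..u, f v) * c ≠ 0) :
    ∫ u in a..b, f u / (1 + (∫ v in a..u, f v) * c) ^ 2 =
      (∫ u in a..b, f u) / (1 + (∫ u in a..b, f u) * c) := by
  set F : ℝ → ℝ := fun u => ∫ v in a..u, f v
  have hF : ContinuousOn F (Icc a b) := by
    have := intervalIntegral.continuousOn_primitive_interval (μ := volume)
      (by rw [uIcc_of_le hab]; exact hf.integrableOn_Icc)
    rwa [uIcc_of_le hab] at this
  have hD : ContinuousOn (fun u => 1 + F u * c) (Icc a b) := by fun_prop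
  have hderiv (x : ℝ) (hx : x ∈ Ioo a b) :
      HasDerivAt (fun u => F u / (1 + F u * c)) (f x / (1 + F x * c) ^ 2) x := by
    have hF' : HasDerivAt F (f x) x := intervalIntegral.integral_hasDerivAt_right
      ((hf.mono (Icc_subset_Icc le_rfl hx.2.le)).intervalIntegrable_of_Icc hx.1.le)
      ((hf.mono Ioo_subset_Icc_self).stronglyMeasurableAtFilter isOpen_Ioo x hx)
      (hf.continuousAt (Icc_mem_nhds hx.1 hx.2))
    have hx' := hne x (Ioo_subset_Icc_self hx)
    refine (hF'.fun_div ((hF'.mul_const c).const_add 1) hx').congr_deriv ?_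
    field_simp
    ring
  have hint : IntervalIntegrable (fun u => f u / (1 + F u * c) ^ 2) volume a b :=
    (hf.div (hD.pow 2) fun u hu => pow_ne_zero 2 (hne u hu)).intervalIntegrable_of_Icc hab
  simpa [F] using intervalIntegral.integral_eq_sub_of_hasDerivAt_of_le hab
    (hF.div hD hne) hderiv hint

lemma one_add_mul_exp_sub_one_pos {r : ℝ} (h0 : 0 ≤ r) (h1 : r ≤ 1) (z : ℝ) :
    0 < 1 + r * (exp z - 1) := by
  rcases h0.eq_or_lt with rfl | h0
  · simp
  · nlinarith [exp_pos z]

noncomputable def pD (t z : ℝ) (φ : ℝ → ℝ) (s : ℝ) : ℝ :=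
  1 + pA φ s / pA φ t * (exp z - 1)

lemma pT_eq_sub_log_pD (t z : ℝ) (φ : ℝ → ℝ) (s : ℝ) : pT t z φ s = φ s - log (pD t z φ s) :=
  rfl

lemma pT_zero (t : ℝ) (φ : ℝ → ℝ) : pT t 0 φ = φ := by
  ext s
  simp [pT]

section

variable {t : ℝ} {φ : ℝ → ℝ}

lemma pA_pos (ht : 0 < t) (hφ : ContinuousOn φ (Icc 0 t)) : 0 < pA φ t :=
  intervalIntegral.intervalIntegral_pos_of_pos
    ((by fun_prop : ContinuousOn (fun u => exp (2 * φ u)) (Icc 0 t)).intervalIntegrable_of_Icc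
      ht.le) (fun _ => exp_pos _) ht

lemma pA_le_pA (hφ : ContinuousOn φ (Icc 0 t)) {s : ℝ} (hs : s ∈ Icc 0 t) : pA φ s ≤ pA φ t :=
  intervalIntegral.integral_mono_interval le_rfl hs.1 hs.2
    (.of_forall fun _ => (exp_pos _).le)
    ((by fun_prop : ContinuousOn (fun u => exp (2 * φ u)) (Icc 0 t)).intervalIntegrable_of_Icc
      (hs.1.trans hs.2))

lemma pD_pos (ht : 0 < t) (hφ : ContinuousOn φ (Icc 0 t)) (z : ℝ) {s : ℝ} (hs : s ∈ Icc 0 t) :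
    0 < pD t z φ s :=
  one_add_mul_exp_sub_one_pos
    (div_nonneg (intervalIntegral.integral_nonneg hs.1 fun _ _ => (exp_pos _).le)
      (pA_pos ht hφ).le)
    ((div_le_one (pA_pos ht hφ)).2 (pA_le_pA hφ hs)) z

lemma pD_right (ht : 0 < t) (hφ : ContinuousOn φ (Icc 0 t)) (z : ℝ) : pD t z φ t = exp z := by
  rw [pD, div_self (pA_pos ht hφ).ne']
  ring

lemma pT_right (ht : 0 < t) (hφ : ContinuousOn φ (Icc 0 t)) (z : ℝ) :
    pT t z φ t = φ t - z := by
  rw [pT_eq_sub_log_pD, pD_right ht hφ, log_exp]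

lemma pA_pT (ht : 0 < t) (hφ : ContinuousOn φ (Icc 0 t)) (z : ℝ) {s : ℝ} (hs : s ∈ Icc 0 t) :
    pA (pT t z φ) s = pA φ s / pD t z φ s := by
  have hsub : Icc 0 s ⊆ Icc 0 t := Icc_subset_Icc le_rfl hs.2
  have hD (u : ℝ) : pD t z φ u = 1 + pA φ u * ((exp z - 1) / pA φ t) := by
    rw [pD]
    ring
  have hexp : EqOn (fun u => exp (2 * pT t z φ u))
      (fun u => exp (2 * φ u) / (1 + pA φ u * ((exp z - 1) / pA φ t)) ^ 2) (Icc 0 s) :=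
    fun u hu => by
      dsimp only
      rw [pT_eq_sub_log_pD, ← hD, mul_sub, exp_sub, mul_comm 2 (log _), exp_mul (log _),
        exp_log (pD_pos ht hφ z (hsub hu)), rpow_two]
  rw [pA, intervalIntegral.integral_congr (by rwa [uIcc_of_le hs.1]), hD]
  exact integral_div_sq_one_add_primitive_mul hs.1 ((hφ.mono hsub).const_mul 2).rexp
    fun u hu => hD u ▸ (pD_pos ht hφ z (hsub hu)).ne'

lemma pA_pT_right (ht : 0 < t) (hφ : ContinuousOn φ (Icc 0 t)) (z : ℝ) :
    pA (pT t z φ) t = pA φ t / exp z := by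
  rw [pA_pT ht hφ z (right_mem_Icc.2 ht.le), pD_right ht hφ]

lemma pZ_pT (ht : 0 < t) (hφ : ContinuousOn φ (Icc 0 t)) (z : ℝ) :
    pZ (pT t z φ) t = pZ φ t := by
  rw [pZ, pZ, pT_right ht hφ, pA_pT_right ht hφ, neg_sub, exp_sub, exp_neg]
  field_simp

lemma pD_pT (ht : 0 < t) (hφ : ContinuousOn φ (Icc 0 t)) (z w : ℝ) {s : ℝ}
    (hs : s ∈ Icc 0 t) : pD t w (pT t z φ) s = pD t (z + w) φ s / pD t z φ s := by
  have hAt := (pA_pos ht hφ).ne'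
  have hDs := (pD_pos ht hφ z hs).ne'
  have hD_add : pD t (z + w) φ s =
      pD t z φ s + pA φ s / pA φ t * exp z * (exp w - 1) := by
    rw [pD, pD, exp_add]
    ring
  rw [hD_add, pD, pA_pT ht hφ z hs, pA_pT_right ht hφ]
  field_simp

lemma pT_pT (ht : 0 < t) (hφ : ContinuousOn φ (Icc 0 t)) (z w : ℝ) {s : ℝ}
    (hs : s ∈ Icc 0 t) : pT t w (pT t z φ) s = pT t (z + w) φ s := by
  rw [pT_eq_sub_log_pD, pD_pT ht hφ z w hs, pT_eq_sub_log_pD, pT_eq_sub_log_pD,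
    log_div (pD_pos ht hφ _ hs).ne' (pD_pos ht hφ z hs).ne']
  ring

end

/-- Fix `μ ∈ ℝ` and let `k_μ` be defined, for each `ζ > 0`, by
`∫_{-∞}^{k_μ(ξ,ζ)} e^{μx} e^{-cosh x/ζ} dx = ∫_ξ^∞ e^{μx} e^{-cosh x/ζ} dx`, and let
`S_μ(φ)(s) = T_{φ_t + k_μ(φ_t, Z_t(φ))}(φ)(s)`.  Then `S_μ ∘ S_{-μ} = Id` on
`C([0,t];ℝ)`. -/
theorem S_comp_S_neg (t : ℝ) (ht : 0 < t) (μ : ℝ)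
    (k : ℝ → ℝ × ℝ → ℝ)
    (hk : ∀ ν : ℝ, ∀ ξ ζ : ℝ, 0 < ζ →
      (∫ x in Iic (k ν (ξ, ζ)), Real.exp (ν * x) * Real.exp (-Real.cosh x / ζ)) =
        ∫ x in Ici ξ, Real.exp (ν * x) * Real.exp (-Real.cosh x / ζ))
    (S : ℝ → (ℝ → ℝ) → (ℝ → ℝ))
    (hS : ∀ ν : ℝ, ∀ φ : ℝ → ℝ, S ν φ = pT t (φ t + k ν (φ t, pZ φ t)) φ) :
    ∀ φ : ℝ → ℝ, ContinuousOn φ (Icc 0 t) →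
      ∀ s ∈ Icc (0:ℝ) t, S μ (S (-μ) φ) s = φ s := by
  intro φ hφ s hs
  have hζ : 0 < pZ φ t := mul_pos (exp_pos _) (pA_pos ht hφ)
  set z := φ t + k (-μ) (φ t, pZ φ t)
  have hS_second : S μ (pT t z φ) = pT t (-z) (pT t z φ) := by
    rw [hS, pT_right ht hφ, pZ_pT ht hφ, show φ t - z = -k (-μ) (φ t, pZ φ t) by ring,
      k_neg_k k hk μ (φ t) hζ, show -k (-μ) (φ t, pZ φ t) + -φ t = -z by ring]
  rw [hS (-μ), hS_second, pT_pT ht hφ z (-z) hs, add_neg_cancel, pT_zero]
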